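/- arXiv:2406.02033 — 4 statements merged into one kernel-verified Lean document; each statement's English description precedes it below -/
import Mathlib

section
/- Let n be a positive integer, A a real n×n matrix, θ a real number, and ρ ≥ 0. Let L be an invertible real 2n×2n matrix and D a real symmetric 2n×2n matrix such that exactly n of the eigenvalues of D (counted with multiplicity) are positive. If ‖Ā + θ·I − L·D·Lᵀ‖ ≤ ρ, then σ_min(A) ≥ |θ| − ρ. -/
set_option maxHeartbeats 1000000

open Matrix Module

/-- Spectral norm (the operator norm induced by the Euclidean vector norm)
of a real square matrix. -/
noncomputable def specNorm {m : Type*} [Fintype m] [DecidableEq m]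
    (M : Matrix m m ℝ) : ℝ :=
  ‖Matrix.toEuclideanCLM (𝕜 := ℝ) M‖

/-- Smallest singular value of a real square matrix: the square root of the
smallest eigenvalue of `AᵀA`. -/
noncomputable def sigmaMin {n : ℕ} (A : Matrix (Fin n) (Fin n) ℝ) : ℝ :=
  Real.sqrt (⨅ i, (Matrix.isHermitian_conjTranspose_mul_self A :
      (Aᵀ * A).IsHermitian).eigenvalues i)

/-- The symmetric block matrix `Ā = [[0, Aᵀ],[A, 0]]`. -/
def abar {n : ℕ} (A : Matrix (Fin n) (Fin n) ℝ) :
    Matrix (Fin n ⊕ Fin n) (Fin n ⊕ Fin n) ℝ :=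
  Matrix.fromBlocks 0 Aᵀ A 0




lemma specNorm_neg {m : Type*} [Fintype m] [DecidableEq m] (M : Matrix m m ℝ) :
    specNorm (-M) = specNorm M := by
  unfold specNorm
  rw [map_neg, norm_neg]

lemma dotProduct_self_nonneg {m : Type*} [Fintype m] (w : m → ℝ) : 0 ≤ w ⬝ᵥ w :=
  Finset.sum_nonneg (fun i _ => mul_self_nonneg (w i))

lemma abs_quad_le {m : Type*} [Fintype m] [DecidableEq m] (M : Matrix m m ℝ) (w : m → ℝ) :
    |w ⬝ᵥ (M *ᵥ w)| ≤ specNorm M * (w ⬝ᵥ w) := by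
  set x : EuclideanSpace ℝ m := (WithLp.equiv 2 _).symm w with hx
  have h1 : w ⬝ᵥ (M *ᵥ w) = inner ℝ x (Matrix.toEuclideanCLM (𝕜 := ℝ) M x) := by
    show w ⬝ᵥ (M *ᵥ w) = inner ℝ (WithLp.toLp 2 w) (WithLp.toLp 2 (M *ᵥ w))
    rw [EuclideanSpace.inner_toLp_toLp]
    simp [dotProduct_comm]
  have h2 : w ⬝ᵥ w = ‖x‖ * ‖x‖ := by
    rw [← real_inner_self_eq_norm_mul_norm]
    show w ⬝ᵥ w = inner ℝ (WithLp.toLp 2 w) (WithLp.toLp 2 w)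
    rw [EuclideanSpace.inner_toLp_toLp]
    simp
  rw [h1, h2]
  calc |inner ℝ x (Matrix.toEuclideanCLM (𝕜 := ℝ) M x)|
      ≤ ‖x‖ * ‖Matrix.toEuclideanCLM (𝕜 := ℝ) M x‖ := abs_real_inner_le_norm _ _
    _ ≤ ‖x‖ * (specNorm M * ‖x‖) := by
        gcongr
        exact (Matrix.toEuclideanCLM (𝕜 := ℝ) M).le_opNorm x
    _ = specNorm M * (‖x‖ * ‖x‖) := by ring

lemma grassmann {V : Type*} [AddCommGroup V] [Module ℝ V] [FiniteDimensional ℝ V]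
    (W P : Submodule ℝ V) (hd : ∀ u, u ∈ W → u ∈ P → u = 0) :
    finrank ℝ W + finrank ℝ P ≤ finrank ℝ V := by
  have hbot : W ⊓ P = ⊥ := by
    rw [eq_bot_iff]
    intro u hu
    exact hd u hu.1 hu.2
  have h := Submodule.finrank_sup_add_finrank_inf_eq W P
  rw [hbot] at h
  simp only [finrank_bot, add_zero] at h
  rw [← h]
  exact Submodule.finrank_le _

lemma sum_dot {κ m : Type*} [Fintype κ] [Fintype m] (f : κ → m → ℝ) (w : m → ℝ) :
    (∑ i, f i) ⬝ᵥ w = ∑ i, f i ⬝ᵥ w := by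
  simp only [dotProduct, Finset.sum_apply, Finset.sum_mul]
  rw [Finset.sum_comm]

lemma dot_sum {κ m : Type*} [Fintype κ] [Fintype m] (w : m → ℝ) (f : κ → m → ℝ) :
    w ⬝ᵥ (∑ i, f i) = ∑ i, w ⬝ᵥ f i := by
  simp only [dotProduct, Finset.sum_apply, Finset.mul_sum]
  rw [Finset.sum_comm]

lemma eig_span {m : Type*} [Fintype m] [DecidableEq m] {S : Matrix m m ℝ}
    (hS : S.IsHermitian) (p : m → Prop) [DecidablePred p] :
    ∃ Q : Submodule ℝ (m → ℝ), finrank ℝ Q = Fintype.card {i // p i} ∧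
      ∀ u ∈ Q, ∃ c : {i // p i} → ℝ,
        u ⬝ᵥ (S *ᵥ u) = ∑ i : {i // p i}, hS.eigenvalues i.1 * (c i)^2 := by
  set v : {i // p i} → (m → ℝ) := fun i => ⇑(hS.eigenvectorBasis i.1) with hv
  have hdot : ∀ i j : {i // p i}, v i ⬝ᵥ v j = if i = j then 1 else 0 := by
    intro i j
    have horth := hS.eigenvectorBasis.orthonormal
    rw [orthonormal_iff_ite] at horth
    have h2 := horth i.1 j.1
    rw [EuclideanSpace.inner_eq_star_dotProduct] at h2
    simp only [star_trivial] at h2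
    rw [show (v i ⬝ᵥ v j) = if i.1 = j.1 then 1 else 0 from (dotProduct_comm _ _).trans h2]
    congr 1
    simp [Subtype.ext_iff]
  have hli : LinearIndependent ℝ v := by
    have h2 := (hS.eigenvectorBasis.orthonormal.comp
      (Subtype.val : {i // p i} → m) Subtype.val_injective).linearIndependent
    exact h2.map' (WithLp.linearEquiv 2 ℝ (m → ℝ)).toLinearMap (LinearEquiv.ker _)
  refine ⟨Submodule.span ℝ (Set.range v), finrank_span_eq_card hli, ?_⟩
  intro u hu
  rw [Submodule.mem_span_range_iff_exists_fun] at hu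
  obtain ⟨c, rfl⟩ := hu
  refine ⟨c, ?_⟩
  have hmv : ∀ j : {i // p i}, S *ᵥ v j = hS.eigenvalues j.1 • v j := fun j =>
    hS.mulVec_eigenvectorBasis j.1
  have hSu : S *ᵥ (∑ i : {i // p i}, c i • v i)
      = ∑ j : {i // p i}, (c j * hS.eigenvalues j.1) • v j := by
    rw [← Matrix.mulVecLin_apply, map_sum]
    refine Finset.sum_congr rfl fun j _ => ?_
    rw [_root_.map_smul, Matrix.mulVecLin_apply, hmv j, smul_smul]
  rw [hSu, sum_dot]
  refine Finset.sum_congr rfl fun i _ => ?_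
  rw [smul_dotProduct, dot_sum]
  simp only [dotProduct_smul, hdot, smul_eq_mul, mul_ite, mul_one, mul_zero]
  rw [Finset.sum_ite_eq Finset.univ i (fun j => c j * hS.eigenvalues j.1)]
  simp only [Finset.mem_univ, if_true]
  ring


lemma sigmaMin_nonneg {n : ℕ} (A : Matrix (Fin n) (Fin n) ℝ) : 0 ≤ sigmaMin A :=
  Real.sqrt_nonneg _

lemma dot_self_eigenvectorBasis {m : Type*} [Fintype m] [DecidableEq m]
    {S : Matrix m m ℝ} (hS : S.IsHermitian) (i : m) :
    ⇑(hS.eigenvectorBasis i) ⬝ᵥ ⇑(hS.eigenvectorBasis i) = 1 := by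
  have horth := hS.eigenvectorBasis.orthonormal
  rw [orthonormal_iff_ite] at horth
  have h2 := horth i i
  rw [EuclideanSpace.inner_eq_star_dotProduct] at h2
  simpa using h2

lemma sigmaMin_vectors {n : ℕ} (hn : 0 < n) (A : Matrix (Fin n) (Fin n) ℝ) :
    ∃ x₀ z₀ : Fin n → ℝ, x₀ ⬝ᵥ x₀ = 1 ∧ z₀ ⬝ᵥ z₀ = 1 ∧
      A *ᵥ x₀ = sigmaMin A • z₀ ∧ Aᵀ *ᵥ z₀ = sigmaMin A • x₀ := by
  have : Nonempty (Fin n) := ⟨⟨0, hn⟩⟩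
  set hH : (Aᵀ * A).IsHermitian := Matrix.isHermitian_conjTranspose_mul_self A with hHdef
  have hPSD : (Aᵀ * A).PosSemidef := by
    have := Matrix.posSemidef_conjTranspose_mul_self A
    simpa using this
  have hnn : ∀ i, 0 ≤ hH.eigenvalues i := fun i => hPSD.eigenvalues_nonneg i
  obtain ⟨i₀, hi₀⟩ := exists_eq_ciInf_of_finite (f := hH.eigenvalues)
  set σ := sigmaMin A with hσdef
  have hσ2 : σ ^ 2 = hH.eigenvalues i₀ := by
    rw [hσdef, show sigmaMin A = Real.sqrt (⨅ i, hH.eigenvalues i) from rfl, ← hi₀, Real.sq_sqrt (hnn i₀)]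
  set x₀ : Fin n → ℝ := ⇑(hH.eigenvectorBasis i₀) with hx₀def
  have hx₀unit : x₀ ⬝ᵥ x₀ = 1 := dot_self_eigenvectorBasis hH i₀
  have heig : (Aᵀ * A) *ᵥ x₀ = hH.eigenvalues i₀ • x₀ := hH.mulVec_eigenvectorBasis i₀
  have hAx : (A *ᵥ x₀) ⬝ᵥ (A *ᵥ x₀) = σ ^ 2 := by
    have : x₀ ⬝ᵥ ((Aᵀ * A) *ᵥ x₀) = (A *ᵥ x₀) ⬝ᵥ (A *ᵥ x₀) := by
      rw [← Matrix.mulVec_mulVec, Matrix.dotProduct_mulVec, Matrix.vecMul_transpose]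
    rw [← this, heig, dotProduct_smul, smul_eq_mul, hx₀unit, mul_one, hσ2]
  rcases eq_or_lt_of_le (sigmaMin_nonneg A) with hσ0 | hσpos
  · -- σ = 0
    have hσz : σ = 0 := hσ0.symm
    have hlam0 : hH.eigenvalues i₀ = 0 := by rw [← hσ2, hσz]; ring
    have hAx0 : A *ᵥ x₀ = 0 := by
      rw [← dotProduct_self_eq_zero (v := A *ᵥ x₀), hAx, hσz]; ring
    have hdet : Aᵀ.det = 0 := by
      have hdet2 : (Aᵀ * A).det = 0 := by
        rw [hH.det_eq_prod_eigenvalues]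
        rw [Finset.prod_eq_zero (Finset.mem_univ i₀)]
        simp [hlam0]
      rw [Matrix.det_mul, Matrix.det_transpose] at hdet2
      rw [Matrix.det_transpose]
      exact mul_self_eq_zero.mp hdet2
    obtain ⟨v, hv0, hvker⟩ := Matrix.exists_mulVec_eq_zero_iff.mpr hdet
    have hvpos : 0 < v ⬝ᵥ v := by
      rcases lt_or_eq_of_le (Finset.sum_nonneg fun i _ => mul_self_nonneg (v i)) with h | h
      · exact h
      · exact absurd (dotProduct_self_eq_zero.mp h.symm) hv0
    refine ⟨x₀, (Real.sqrt (v ⬝ᵥ v))⁻¹ • v, hx₀unit, ?_, ?_, ?_⟩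
    · rw [smul_dotProduct, dotProduct_smul, smul_eq_mul, smul_eq_mul]
      rw [← mul_assoc, ← mul_inv]
      rw [← Real.sqrt_mul_self (le_of_lt hvpos)]
      field_simp
      rw [Real.sq_sqrt (by positivity)]
    · rw [hAx0, hσz, zero_smul]
    · rw [Matrix.mulVec_smul, hvker, smul_zero, hσz, zero_smul]
  · -- σ > 0
    have hσne : σ ≠ 0 := ne_of_gt hσpos
    refine ⟨x₀, σ⁻¹ • (A *ᵥ x₀), hx₀unit, ?_, ?_, ?_⟩
    · rw [smul_dotProduct, dotProduct_smul, smul_eq_mul, smul_eq_mul, hAx]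
      field_simp [sq]
    · rw [smul_smul, mul_inv_cancel₀ hσne, one_smul]
    · rw [Matrix.mulVec_smul, Matrix.mulVec_mulVec, heig, smul_smul, ← hσ2]
      congr 1
      field_simp






lemma dotProduct_self_pos {m : Type*} [Fintype m] {w : m → ℝ} (hw : w ≠ 0) : 0 < w ⬝ᵥ w := by
  rcases lt_or_eq_of_le (dotProduct_self_nonneg w) with h | h
  · exact h
  · exact absurd (dotProduct_self_eq_zero.mp h.symm) hw

/-- linear version of `Equiv.sumArrowEquivProdArrow` -/
noncomputable def sumProdLequiv (α β : Type*) : ((α → ℝ) × (β → ℝ)) ≃ₗ[ℝ] (α ⊕ β → ℝ) where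
  toFun fg := Sum.elim fg.1 fg.2
  invFun f := (f ∘ Sum.inl, f ∘ Sum.inr)
  map_add' a b := by funext i; cases i <;> rfl
  map_smul' c a := by funext i; cases i <;> rfl
  left_inv f := rfl
  right_inv f := by funext i; cases i <;> rfl

/-- the linear functional `x ↦ x₀ ⬝ᵥ x`. -/
noncomputable def dotLin {n : ℕ} (x₀ : Fin n → ℝ) : (Fin n → ℝ) →ₗ[ℝ] ℝ where
  toFun x := x₀ ⬝ᵥ x
  map_add' a b := dotProduct_add x₀ a b
  map_smul' r a := dotProduct_smul r x₀ a

/-- The parametrization of the test subspace. -/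
noncomputable def testMap {n : ℕ} (A : Matrix (Fin n) (Fin n) ℝ) (x₀ z₀ : Fin n → ℝ) :
    ((Fin n → ℝ) × ℝ) →ₗ[ℝ] (Fin n ⊕ Fin n → ℝ) :=
  (sumProdLequiv (Fin n) (Fin n)).toLinearMap.comp
    (LinearMap.prod (LinearMap.fst ℝ (Fin n → ℝ) ℝ)
      ((A.mulVecLin.comp (LinearMap.id - LinearMap.smulRight (dotLin x₀) x₀)).comp
          (LinearMap.fst ℝ (Fin n → ℝ) ℝ)
        + LinearMap.smulRight (LinearMap.snd ℝ (Fin n → ℝ) ℝ) z₀))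

lemma testMap_apply {n : ℕ} (A : Matrix (Fin n) (Fin n) ℝ) (x₀ z₀ : Fin n → ℝ)
    (x : Fin n → ℝ) (b : ℝ) :
    testMap A x₀ z₀ (x, b) = Sum.elim x (A *ᵥ (x - (x₀ ⬝ᵥ x) • x₀) + b • z₀) := rfl

lemma core {n : ℕ} (hn : 0 < n) (A : Matrix (Fin n) (Fin n) ℝ) (θ ρ σ : ℝ)
    (hρ : 0 ≤ ρ) (hσ : 0 ≤ σ) (hσlt : σ < θ - ρ)
    (x₀ z₀ : Fin n → ℝ) (hx₀ : x₀ ⬝ᵥ x₀ = 1) (hz₀ : z₀ ⬝ᵥ z₀ = 1)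
    (hAx₀ : A *ᵥ x₀ = σ • z₀) (hAz₀ : Aᵀ *ᵥ z₀ = σ • x₀)
    (N : Matrix (Fin n ⊕ Fin n) (Fin n ⊕ Fin n) ℝ)
    (P : Submodule ℝ (Fin n ⊕ Fin n → ℝ)) (hPrank : n ≤ finrank ℝ P)
    (hPneg : ∀ u ∈ P, u ⬝ᵥ (N *ᵥ u) ≤ 0)
    (hres : specNorm (abar A + θ • (1 : Matrix (Fin n ⊕ Fin n) (Fin n ⊕ Fin n) ℝ) - N) ≤ ρ) :
    False := by
  classical
  set M : Matrix (Fin n ⊕ Fin n) (Fin n ⊕ Fin n) ℝ := abar A + θ • 1 with hMdef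
  set E : Matrix (Fin n ⊕ Fin n) (Fin n ⊕ Fin n) ℝ := M - N with hEdef
  set F := testMap A x₀ z₀ with hFdef
  -- key quadratic bound
  have hkey : ∀ (x : Fin n → ℝ) (b : ℝ), (x, b) ≠ (0 : (Fin n → ℝ) × ℝ) →
      0 < (F (x, b)) ⬝ᵥ (N *ᵥ (F (x, b))) := by
    intro x b hne
    set a : ℝ := x₀ ⬝ᵥ x with hadef
    set x' : Fin n → ℝ := x - a • x₀ with hx'def
    set y : Fin n → ℝ := A *ᵥ x' + b • z₀ with hydef
    have hw : F (x, b) = Sum.elim x y := testMap_apply A x₀ z₀ x b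
    rw [hw]
    have hxsplit : x = x' + a • x₀ := by rw [hx'def]; abel
    have h1 : x₀ ⬝ᵥ x' = 0 := by
      rw [hx'def, dotProduct_sub, dotProduct_smul, hx₀]
      simp [hadef]
    have h2 : x' ⬝ᵥ x₀ = 0 := by rw [dotProduct_comm]; exact h1
    have h3 : (A *ᵥ x') ⬝ᵥ z₀ = 0 := by
      rw [← Matrix.vecMul_transpose, ← Matrix.dotProduct_mulVec, hAz₀,
        dotProduct_smul, smul_eq_mul, h2, mul_zero]
    have h4 : z₀ ⬝ᵥ (A *ᵥ x') = 0 := by rw [dotProduct_comm]; exact h3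
    have h5 : A *ᵥ x = A *ᵥ x' + (a * σ) • z₀ := by
      conv_lhs => rw [hxsplit]
      rw [Matrix.mulVec_add, Matrix.mulVec_smul, hAx₀, smul_smul]
    set p : ℝ := (A *ᵥ x') ⬝ᵥ (A *ᵥ x') with hpdef
    set q : ℝ := x' ⬝ᵥ x' with hqdef
    have hp0 : 0 ≤ p := dotProduct_self_nonneg _
    have hq0 : 0 ≤ q := dotProduct_self_nonneg _
    have hyAx : y ⬝ᵥ (A *ᵥ x) = p + (a * b) * σ := by
      rw [h5, hydef, add_dotProduct, dotProduct_add, dotProduct_add,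
        smul_dotProduct, smul_dotProduct, dotProduct_smul,
        dotProduct_smul, h3, h4, hz₀]
      simp only [smul_eq_mul, mul_zero, zero_mul, add_zero, zero_add, mul_one, hpdef]
      ring
    have hyy : y ⬝ᵥ y = p + b^2 := by
      rw [hydef, add_dotProduct, dotProduct_add, dotProduct_add,
        smul_dotProduct, smul_dotProduct, dotProduct_smul,
        dotProduct_smul, h3, h4, hz₀]
      simp only [smul_eq_mul, mul_zero, zero_mul, add_zero, zero_add, mul_one, hpdef]
      ring
    have hxx : x ⬝ᵥ x = q + a^2 := by
      conv_lhs => rw [hxsplit]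
      rw [add_dotProduct, dotProduct_add, dotProduct_add,
        smul_dotProduct, smul_dotProduct, dotProduct_smul,
        dotProduct_smul, h1, h2, hx₀]
      simp only [smul_eq_mul, mul_zero, zero_mul, add_zero, zero_add, mul_one, hqdef]
      ring
    have hww : (Sum.elim x y) ⬝ᵥ (Sum.elim x y) = q + a^2 + (p + b^2) := by
      rw [sumElim_dotProduct_sumElim, hxx, hyy]
    have hwpos : 0 < (Sum.elim x y) ⬝ᵥ (Sum.elim x y) := by
      have hxb : x ≠ 0 ∨ b ≠ 0 := by
        by_contra hc
        push_neg at hc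
        exact hne (by rw [hc.1, hc.2]; rfl)
      rw [hww]
      rcases hxb with hx | hb
      · have hxpos := dotProduct_self_pos hx
        rw [hxx] at hxpos
        nlinarith [sq_nonneg b]
      · have : 0 < b^2 := by positivity
        nlinarith [sq_nonneg a]
    have habarw : (abar A) *ᵥ (Sum.elim x y) = Sum.elim (Aᵀ *ᵥ y) (A *ᵥ x) := by
      rw [abar, Matrix.fromBlocks_mulVec]
      simp
    have hxAty : x ⬝ᵥ (Aᵀ *ᵥ y) = y ⬝ᵥ (A *ᵥ x) := by
      rw [Matrix.dotProduct_mulVec, Matrix.vecMul_transpose, dotProduct_comm]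
    have hMw : (Sum.elim x y) ⬝ᵥ (M *ᵥ (Sum.elim x y))
        = θ * ((Sum.elim x y) ⬝ᵥ (Sum.elim x y)) + 2 * (y ⬝ᵥ (A *ᵥ x)) := by
      rw [hMdef, Matrix.add_mulVec, Matrix.smul_mulVec, Matrix.one_mulVec,
        dotProduct_add, dotProduct_smul, habarw]
      rw [sumElim_dotProduct_sumElim, hxAty]
      simp only [smul_eq_mul]
      ring
    have hEbound : (Sum.elim x y) ⬝ᵥ (E *ᵥ (Sum.elim x y))
        ≤ ρ * ((Sum.elim x y) ⬝ᵥ (Sum.elim x y)) := by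
      have h := (abs_le.mp (abs_quad_le E (Sum.elim x y))).2
      calc (Sum.elim x y) ⬝ᵥ (E *ᵥ (Sum.elim x y)) ≤ |(Sum.elim x y) ⬝ᵥ (E *ᵥ (Sum.elim x y))| :=
            le_abs_self _
        _ ≤ specNorm E * ((Sum.elim x y) ⬝ᵥ (Sum.elim x y)) := abs_quad_le E _
        _ ≤ ρ * ((Sum.elim x y) ⬝ᵥ (Sum.elim x y)) :=
            mul_le_mul_of_nonneg_right hres (dotProduct_self_nonneg _)
    have hNw : (Sum.elim x y) ⬝ᵥ (N *ᵥ (Sum.elim x y))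
        = (Sum.elim x y) ⬝ᵥ (M *ᵥ (Sum.elim x y))
          - (Sum.elim x y) ⬝ᵥ (E *ᵥ (Sum.elim x y)) := by
      rw [hEdef, Matrix.sub_mulVec, dotProduct_sub]
      ring
    rw [hNw, hMw, hyAx]
    rw [hww] at hEbound hwpos ⊢
    nlinarith [mul_nonneg hσ (sq_nonneg (a + b)), mul_nonneg hσ hq0, mul_nonneg hσ hp0,
      mul_pos (by linarith : (0:ℝ) < θ - ρ - σ) hwpos]
  -- injectivity
  have hker : ∀ xb : (Fin n → ℝ) × ℝ, F xb = 0 → xb = 0 := by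
    intro xb h0
    by_contra hne
    have h1 := hkey xb.1 xb.2 (by simpa using hne)
    rw [show ((xb.1, xb.2) : (Fin n → ℝ) × ℝ) = xb from rfl, h0] at h1
    simp at h1
  have hinj : Function.Injective F := by
    rw [← LinearMap.ker_eq_bot, Submodule.eq_bot_iff]
    exact fun xb h => hker xb (LinearMap.mem_ker.mp h)
  set W := LinearMap.range F with hWdef
  have hWrank : finrank ℝ W = n + 1 := by
    rw [hWdef, LinearMap.finrank_range_of_inj hinj, Module.finrank_prod, Module.finrank_pi,
      Module.finrank_self, Fintype.card_fin]
  have hd : ∀ u, u ∈ W → u ∈ P → u = 0 := by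
    rintro u ⟨⟨x, b⟩, rfl⟩ hP
    by_contra hu
    have h1 : (x, b) ≠ (0 : (Fin n → ℝ) × ℝ) := by
      intro h0
      exact hu (by rw [h0, map_zero])
    exact absurd (hPneg _ hP) (not_le.mpr (hkey x b h1))
  have hG := grassmann W P hd
  have htot : finrank ℝ (Fin n ⊕ Fin n → ℝ) = n + n := by
    rw [Module.finrank_pi]
    simp
  rw [htot, hWrank] at hG
  omega









theorem stmt0 {n : ℕ} (hn : 0 < n) (A : Matrix (Fin n) (Fin n) ℝ)
    (θ ρ : ℝ) (hρ : 0 ≤ ρ)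
    (L D : Matrix (Fin n ⊕ Fin n) (Fin n ⊕ Fin n) ℝ)
    (hL : IsUnit L) (hD : D.IsHermitian)
    (hcount : Fintype.card {i // 0 < hD.eigenvalues i} = n)
    (hres : specNorm (abar A + θ • (1 : Matrix (Fin n ⊕ Fin n) (Fin n ⊕ Fin n) ℝ)
        - L * D * Lᵀ) ≤ ρ) :
    |θ| - ρ ≤ sigmaMin A := by
  classical
  by_contra hcon
  push_neg at hcon
  have hσ0 := sigmaMin_nonneg A
  obtain ⟨x₀, z₀, hx₀u, hz₀u, hAx₀, hAz₀⟩ := sigmaMin_vectors hn A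
  -- the congruence transformation
  obtain ⟨iL⟩ := hL.nonempty_invertible
  letI : Invertible L := iL
  letI : Invertible Lᵀ := Matrix.invertibleTranspose L
  set e : (Fin n ⊕ Fin n → ℝ) ≃ₗ[ℝ] (Fin n ⊕ Fin n → ℝ) :=
    Matrix.toLinearEquiv' Lᵀ inferInstance with hedef
  have he : ∀ u, e u = Lᵀ *ᵥ u := fun u => rfl
  have hcongr : ∀ u : Fin n ⊕ Fin n → ℝ,
      u ⬝ᵥ ((L * D * Lᵀ) *ᵥ u) = (Lᵀ *ᵥ u) ⬝ᵥ (D *ᵥ (Lᵀ *ᵥ u)) := by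
    intro u
    calc u ⬝ᵥ ((L * D * Lᵀ) *ᵥ u) = (u ᵥ* (L * (D * Lᵀ))) ⬝ᵥ u := by
          rw [Matrix.dotProduct_mulVec, mul_assoc]
      _ = ((u ᵥ* L) ᵥ* (D * Lᵀ)) ⬝ᵥ u := by rw [Matrix.vecMul_vecMul]
      _ = (u ᵥ* L) ⬝ᵥ ((D * Lᵀ) *ᵥ u) := by rw [Matrix.dotProduct_mulVec]
      _ = (Lᵀ *ᵥ u) ⬝ᵥ (D *ᵥ (Lᵀ *ᵥ u)) := by
          rw [← Matrix.mulVec_mulVec, Matrix.mulVec_transpose]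
  have hcard : Fintype.card {i // hD.eigenvalues i ≤ 0} = n := by
    have h1 : Fintype.card {i // ¬ 0 < hD.eigenvalues i}
        = Fintype.card (Fin n ⊕ Fin n) - Fintype.card {i // 0 < hD.eigenvalues i} :=
      Fintype.card_subtype_compl _
    have h2 : Fintype.card {i // hD.eigenvalues i ≤ 0}
        = Fintype.card {i // ¬ 0 < hD.eigenvalues i} :=
      Fintype.card_congr (Equiv.subtypeEquivRight (fun i => by simp [not_lt]))
    rw [h2, h1, hcount]
    simp
  rcases le_or_gt 0 θ with hθpos | hθneg
  · -- θ ≥ 0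
    rw [abs_of_nonneg hθpos] at hcon
    obtain ⟨Q, hQrank, hQform⟩ := eig_span hD (fun i => hD.eigenvalues i ≤ 0)
    refine core hn A θ ρ (sigmaMin A) hρ hσ0 (by linarith) x₀ z₀ hx₀u hz₀u hAx₀ hAz₀
      (L * D * Lᵀ) (Submodule.map (e.symm : _ →ₗ[ℝ] _) Q) ?_ ?_ hres
    · rw [LinearEquiv.finrank_map_eq, hQrank, hcard]
    · rintro u ⟨q, hq, rfl⟩
      have heq : Lᵀ *ᵥ (e.symm q) = q := by rw [← he, e.apply_symm_apply]
      simp only [LinearEquiv.coe_coe]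
      rw [hcongr, heq]
      obtain ⟨c, hc⟩ := hQform q hq
      rw [hc]
      refine Finset.sum_nonpos (fun i _ => ?_)
      exact mul_nonpos_of_nonpos_of_nonneg i.2 (sq_nonneg _)
  · -- θ < 0
    rw [abs_of_neg hθneg] at hcon
    obtain ⟨Q, hQrank, hQform⟩ := eig_span hD (fun i => 0 < hD.eigenvalues i)
    refine core hn (-A) (-θ) ρ (sigmaMin A) hρ hσ0 (by linarith) x₀ (-z₀) hx₀u
      (by rw [neg_dotProduct, dotProduct_neg, hz₀u]; ring) ?_ ?_
      (-(L * D * Lᵀ)) (Submodule.map (e.symm : _ →ₗ[ℝ] _) Q) ?_ ?_ ?_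
    · rw [Matrix.neg_mulVec, hAx₀, smul_neg]
    · rw [Matrix.transpose_neg, Matrix.neg_mulVec, Matrix.mulVec_neg, hAz₀, neg_neg]
    · rw [LinearEquiv.finrank_map_eq, hQrank, hcount]
    · rintro u ⟨q, hq, rfl⟩
      have heq : Lᵀ *ᵥ (e.symm q) = q := by rw [← he, e.apply_symm_apply]
      simp only [LinearEquiv.coe_coe]
      rw [Matrix.neg_mulVec, dotProduct_neg, hcongr, heq]
      obtain ⟨c, hc⟩ := hQform q hq
      rw [hc]
      simp only [neg_nonpos]
      refine Finset.sum_nonneg (fun i _ => ?_)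
      exact mul_nonneg (le_of_lt i.2) (sq_nonneg _)
    · have hmat : abar (-A) + (-θ) • (1 : Matrix (Fin n ⊕ Fin n) (Fin n ⊕ Fin n) ℝ)
          - -(L * D * Lᵀ)
          = -(abar A + θ • (1 : Matrix (Fin n ⊕ Fin n) (Fin n ⊕ Fin n) ℝ) - L * D * Lᵀ) := by
        have habar : abar (-A) = -(abar A) := by
          ext i j
          cases i <;> cases j <;> simp [abar]
        rw [habar]
        module
      rw [hmat, specNorm_neg]
      exact hres
end

section
/- Let n be a positive integer, A a real n×n matrix, θ a real number, and ρ ≥ 0 with |θ| > ρ. Let L be an invertible real 2n×2n matrix and D a real symmetric 2n×2n matrix such that exactly n of the eigenvalues of D (counted with multiplicity) are positive. If ‖Ā + θ·I − L·D·Lᵀ‖ ≤ ρ, then A is nonsingular and ‖A⁻¹‖ ≤ 1/(|θ| − ρ). -/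
open Matrix

set_option linter.unusedSectionVars false
open scoped RealInnerProductSpace

section Aux
variable {ι : Type*} [Fintype ι] [DecidableEq ι]

noncomputable def enorm (u : ι → ℝ) : ℝ := ‖(WithLp.equiv 2 (ι → ℝ)).symm u‖

lemma inner_eq_dot (x y : EuclideanSpace ℝ ι) :
    ⟪x, y⟫ = (WithLp.equiv 2 (ι → ℝ) x) ⬝ᵥ (WithLp.equiv 2 (ι → ℝ) y) := by
  rw [EuclideanSpace.inner_eq_star_dotProduct]
  simp [dotProduct, mul_comm]

lemma clm_apply (M : Matrix ι ι ℝ) (y : EuclideanSpace ℝ ι) :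
    WithLp.equiv 2 (ι → ℝ) (toEuclideanCLM (𝕜 := ℝ) M y) =
      M *ᵥ (WithLp.equiv 2 (ι → ℝ) y) := by
  exact Matrix.ofLp_toEuclideanCLM M y

lemma dot_self_eq (u : ι → ℝ) : u ⬝ᵥ u = _root_.enorm u ^ 2 := by
  have := real_inner_self_eq_norm_sq ((WithLp.equiv 2 (ι → ℝ)).symm u)
  rw [inner_eq_dot] at this
  simpa [_root_.enorm] using this

lemma abs_dot_le (u w : ι → ℝ) : |u ⬝ᵥ w| ≤ _root_.enorm u * _root_.enorm w := by
  have := abs_real_inner_le_norm ((WithLp.equiv 2 (ι → ℝ)).symm u)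
    ((WithLp.equiv 2 (ι → ℝ)).symm w)
  rw [inner_eq_dot] at this
  simpa [_root_.enorm] using this

lemma abs_quad_le_s1 (M : Matrix ι ι ℝ) (u : ι → ℝ) :
    |u ⬝ᵥ (M *ᵥ u)| ≤ specNorm M * (u ⬝ᵥ u) := by
  set y := (WithLp.equiv 2 (ι → ℝ)).symm u
  have h1 : u ⬝ᵥ (M *ᵥ u) = ⟪y, toEuclideanCLM (𝕜 := ℝ) M y⟫ := by
    rw [inner_eq_dot, clm_apply]; simp [y]
  calc |u ⬝ᵥ (M *ᵥ u)| ≤ ‖y‖ * ‖toEuclideanCLM (𝕜 := ℝ) M y‖ := by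
        rw [h1]; exact abs_real_inner_le_norm _ _
    _ ≤ ‖y‖ * (specNorm M * ‖y‖) := by
        exact mul_le_mul_of_nonneg_left ((toEuclideanCLM (𝕜 := ℝ) M).le_opNorm y) (norm_nonneg _)
    _ = specNorm M * (u ⬝ᵥ u) := by rw [dot_self_eq]; show _ = _ * _root_.enorm u ^2; unfold _root_.enorm; ring

end Aux
section Spec
variable {ι : Type*} [Fintype ι] [DecidableEq ι]

lemma quad_expand {D : Matrix ι ι ℝ} (hD : D.IsHermitian) (y : EuclideanSpace ℝ ι) :
    ⟪y, toEuclideanCLM (𝕜 := ℝ) D y⟫ =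
      ∑ i, hD.eigenvalues i * ⟪hD.eigenvectorBasis i, y⟫ ^ 2 := by
  have hb : ∀ i, ⟪hD.eigenvectorBasis i, toEuclideanCLM (𝕜 := ℝ) D y⟫ =
      hD.eigenvalues i * ⟪hD.eigenvectorBasis i, y⟫ := by
    intro i
    rw [inner_eq_dot, inner_eq_dot, clm_apply]
    have h1 : (WithLp.equiv 2 (ι → ℝ)) (hD.eigenvectorBasis i) = ⇑(hD.eigenvectorBasis i) := rfl
    rw [h1, Matrix.dotProduct_mulVec, ← Matrix.mulVec_transpose,
      ← Matrix.conjTranspose_eq_transpose_of_trivial, hD.eq, hD.mulVec_eigenvectorBasis,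
      smul_dotProduct]
    rfl
  rw [← OrthonormalBasis.sum_inner_mul_inner hD.eigenvectorBasis y
    (toEuclideanCLM (𝕜 := ℝ) D y)]
  refine Finset.sum_congr rfl fun i _ => ?_
  rw [hb i, real_inner_comm]
  ring

lemma dim_bound {D : Matrix ι ι ℝ} (hD : D.IsHermitian) (ε : ℝ)
    (W : Submodule ℝ (EuclideanSpace ℝ ι))
    (hW : ∀ y ∈ W, y ≠ 0 → 0 < ε * ⟪y, toEuclideanCLM (𝕜 := ℝ) D y⟫) :
    Module.finrank ℝ W ≤ Fintype.card {i // 0 < ε * hD.eigenvalues i} := by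
  classical
  set Φ : EuclideanSpace ℝ ι →ₗ[ℝ] ({i // 0 < ε * hD.eigenvalues i} → ℝ) :=
    LinearMap.pi (fun j => (innerSL ℝ (hD.eigenvectorBasis j.1)).toLinearMap) with hΦ
  set V := LinearMap.ker Φ with hV
  have hVy : ∀ y ∈ V, ε * ⟪y, toEuclideanCLM (𝕜 := ℝ) D y⟫ ≤ 0 := by
    intro y hy
    rw [quad_expand hD y, Finset.mul_sum]
    refine Finset.sum_nonpos fun i _ => ?_
    by_cases hi : 0 < ε * hD.eigenvalues i
    · have : ⟪hD.eigenvectorBasis i, y⟫ = 0 := congrFun (LinearMap.mem_ker.1 hy) ⟨i, hi⟩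
      rw [this]; ring_nf; simp
    · push_neg at hi
      have : ε * (hD.eigenvalues i * ⟪hD.eigenvectorBasis i, y⟫ ^ 2)
          = (ε * hD.eigenvalues i) * ⟪hD.eigenvectorBasis i, y⟫ ^ 2 := by ring
      rw [this]
      exact mul_nonpos_of_nonpos_of_nonneg hi (sq_nonneg _)
  have hdisj : Disjoint W V := by
    rw [disjoint_iff_inf_le]
    intro y hy
    rcases eq_or_ne y 0 with h | h
    · simp [h]
    · exact absurd (hW y hy.1 h) (not_lt.2 (hVy y hy.2))
  have hrank := LinearMap.finrank_range_add_finrank_ker Φ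
  rw [← hV, finrank_euclideanSpace] at hrank
  have hrange : Module.finrank ℝ (LinearMap.range Φ)
      ≤ Fintype.card {i // 0 < ε * hD.eigenvalues i} := by
    have := Submodule.finrank_le (LinearMap.range Φ)
    rwa [Module.finrank_fintype_fun_eq_card] at this
  have hsum := Submodule.finrank_add_finrank_le_of_disjoint hdisj
  rw [finrank_euclideanSpace] at hsum
  omega

end Spec
section Main
variable {n : ℕ}

/-- The embedding `(x, t) ↦ Sum.elim (t • v) x`. -/
def psi0 (v : Fin n → ℝ) : ((Fin n → ℝ) × ℝ) →ₗ[ℝ] ((Fin n ⊕ Fin n) → ℝ) where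
  toFun p := Sum.elim (p.2 • v) p.1
  map_add' p q := by
    funext i; cases i <;> simp [add_smul] <;> ring
  map_smul' c p := by
    funext i; cases i <;> simp [smul_eq_mul, mul_smul] <;> ring

lemma psi0_inj {v : Fin n → ℝ} (hv : v ≠ 0) : Function.Injective (psi0 v) := by
  rw [← LinearMap.ker_eq_bot, LinearMap.ker_eq_bot']
  intro p hp
  have h2 : p.1 = 0 := by
    funext i; exact congrFun hp (Sum.inr i)
  have h1 : p.2 • v = 0 := by
    funext i; exact congrFun hp (Sum.inl i)
  rcases smul_eq_zero.1 h1 with h | h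
  · exact Prod.ext h2 h
  · exact absurd h hv

set_option maxHeartbeats 1000000 in
theorem key {n : ℕ} (hn : 0 < n) (A : Matrix (Fin n) (Fin n) ℝ)
    (θ ρ : ℝ) (hρ : 0 ≤ ρ) (hθρ : ρ < |θ|)
    (L D : Matrix (Fin n ⊕ Fin n) (Fin n ⊕ Fin n) ℝ)
    (hL : IsUnit L) (hD : D.IsHermitian)
    (hcount : Fintype.card {i // 0 < hD.eigenvalues i} = n)
    (hres : specNorm (abar A + θ • (1 : Matrix (Fin n ⊕ Fin n) (Fin n ⊕ Fin n) ℝ)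
        - L * D * Lᵀ) ≤ ρ) (v : Fin n → ℝ) :
    (|θ| - ρ) * _root_.enorm v ≤ _root_.enorm (A *ᵥ v) := by
  classical
  set c := |θ| - ρ with hc_def
  have hc : 0 < c := by rw [hc_def]; linarith
  by_contra hcon
  push_neg at hcon
  -- v ≠ 0
  have hv : v ≠ 0 := by
    rintro rfl
    simp [_root_.enorm, Matrix.mulVec_zero] at hcon
  have hnv : 0 < _root_.enorm v := by
    have : (WithLp.equiv 2 ((Fin n) → ℝ)).symm v ≠ 0 := by
      simpa using hv
    exact norm_pos_iff.2 this
  set na := _root_.enorm (A *ᵥ v) with hna_def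
  have hna0 : 0 ≤ na := norm_nonneg _
  have hnalt : na < c * _root_.enorm v := hcon
  -- sign
  set ε : ℝ := if 0 < θ then 1 else -1 with hε_def
  have hεθ : ε * θ = |θ| := by
    rcases lt_trichotomy θ 0 with h | h | h
    · rw [hε_def, if_neg (by linarith), abs_of_neg h]; ring
    · exfalso; rw [h, abs_zero] at hθρ; linarith
    · rw [hε_def, if_pos h, abs_of_pos h]; ring
  have hεabs : ε = 1 ∨ ε = -1 := by
    rw [hε_def]; split <;> simp
  -- the residual matrix
  set E := abar A + θ • (1 : Matrix (Fin n ⊕ Fin n) (Fin n ⊕ Fin n) ℝ) - L * D * Lᵀ with hE_def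
  have hLDL : L * D * Lᵀ = abar A + θ • (1 : Matrix (Fin n ⊕ Fin n) (Fin n ⊕ Fin n) ℝ) - E := by
    rw [hE_def, sub_sub_cancel]
  -- the subspace
  have hLT : IsUnit Lᵀ := (Matrix.isUnit_transpose L).mpr hL
  have hLTinj : Function.Injective (Matrix.mulVecLin Lᵀ) :=
    Matrix.mulVec_injective_iff_isUnit.mpr hLT
  set ψ : ((Fin n → ℝ) × ℝ) →ₗ[ℝ] EuclideanSpace ℝ (Fin n ⊕ Fin n) :=
    (WithLp.linearEquiv 2 ℝ ((Fin n ⊕ Fin n) → ℝ)).symm.toLinearMap ∘ₗ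
      (Matrix.mulVecLin Lᵀ) ∘ₗ psi0 v with hψ_def
  have hψinj : Function.Injective ψ := by
    rw [hψ_def]
    exact ((WithLp.linearEquiv 2 ℝ _).symm.injective.comp hLTinj).comp (psi0_inj hv)
  set W := LinearMap.range ψ with hW_def
  have hWrank : Module.finrank ℝ W = n + 1 := by
    rw [hW_def, LinearMap.finrank_range_of_inj hψinj]
    simp [Module.finrank_prod, Module.finrank_fintype_fun_eq_card]
  -- positivity of the quadratic form on W
  have hpos : ∀ y ∈ W, y ≠ 0 → 0 < ε * ⟪y, toEuclideanCLM (𝕜 := ℝ) D y⟫ := by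
    rintro y hy hy0
    obtain ⟨p, rfl⟩ := hy
    have hp : p ≠ 0 := by rintro rfl; exact hy0 (map_zero ψ)
    set t := p.2
    set x := p.1
    set z : (Fin n ⊕ Fin n) → ℝ := Sum.elim (t • v) x with hz_def
    have hz0 : z ≠ 0 := by
      intro h
      exact hp (psi0_inj hv (by rw [map_zero]; exact h))
    have hψp : (WithLp.equiv 2 ((Fin n ⊕ Fin n) → ℝ)) (ψ p) = Lᵀ *ᵥ z := rfl
    have hq : ⟪ψ p, toEuclideanCLM (𝕜 := ℝ) D (ψ p)⟫ =
        z ⬝ᵥ ((L * D * Lᵀ) *ᵥ z) := by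
      rw [inner_eq_dot, clm_apply, hψp, ← Matrix.mulVec_mulVec, ← Matrix.mulVec_mulVec,
        Matrix.dotProduct_mulVec z L, ← Matrix.mulVec_transpose]
    set S := z ⬝ᵥ z with hS_def
    have hSz : S = (z ⬝ᵥ z) := rfl
    have hS : 0 < S := by
      rw [hS_def, dot_self_eq]
      have h2 : (WithLp.equiv 2 ((Fin n ⊕ Fin n) → ℝ)).symm z ≠ 0 := by simpa using hz0
      exact pow_pos (norm_pos_iff.2 h2) 2
    set d := x ⬝ᵥ (A *ᵥ v) with hd_def
    have hAz : z ⬝ᵥ (abar A *ᵥ z) = 2 * t * d := by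
      rw [hz_def, abar, Matrix.fromBlocks_mulVec]
      simp only [Matrix.zero_mulVec, add_zero, zero_add, Sum.elim_comp_inl, Sum.elim_comp_inr]
      rw [sumElim_dotProduct_sumElim, Matrix.mulVec_smul, smul_dotProduct,
        dotProduct_smul, Matrix.dotProduct_mulVec v Aᵀ, Matrix.vecMul_transpose,
        dotProduct_comm]
      rw [hd_def]; simp [smul_eq_mul]; ring
    have hIz : z ⬝ᵥ ((θ • (1 : Matrix (Fin n ⊕ Fin n) (Fin n ⊕ Fin n) ℝ)) *ᵥ z) = θ * S := by
      rw [Matrix.smul_mulVec, Matrix.one_mulVec, dotProduct_smul]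
      rfl
    have hEb : |z ⬝ᵥ (E *ᵥ z)| ≤ ρ * S := by
      calc |z ⬝ᵥ (E *ᵥ z)| ≤ specNorm E * (z ⬝ᵥ z) := abs_quad_le_s1 E z
        _ ≤ ρ * S := by
            rw [← hS_def]
            exact mul_le_mul_of_nonneg_right hres hS.le
    have hεE : ε * (z ⬝ᵥ (E *ᵥ z)) ≤ ρ * S := by
      rcases hεabs with h | h <;> rw [h] <;>
        [skip; rw [neg_one_mul]] <;>
        [exact (le_abs_self _).trans (by simpa using hEb);
         exact (neg_le_abs _).trans (by simpa using hEb)]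
    set nx := _root_.enorm x with hnx_def
    have hnx0 : 0 ≤ nx := norm_nonneg _
    have hCS : |d| ≤ nx * na := by
      rw [hd_def, hna_def, hnx_def]; exact abs_dot_le x (A *ᵥ v)
    have htd : -(2 * |t| * (nx * na)) ≤ 2 * ε * t * d := by
      have h1 : |2 * ε * t * d| = 2 * |t| * |d| := by
        rcases hεabs with h | h <;> rw [h] <;> rw [abs_mul] <;> simp [abs_mul]
      have h2 : 2 * |t| * |d| ≤ 2 * |t| * (nx * na) := by
        apply mul_le_mul_of_nonneg_left hCS
        positivity
      calc -(2 * |t| * (nx * na)) ≤ -(2 * |t| * |d|) := by linarith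
        _ ≤ -|2 * ε * t * d| := by rw [h1]
        _ ≤ 2 * ε * t * d := neg_abs_le _
    -- z ⬝ᵥ z in coordinates
    have hzz : S = t ^ 2 * _root_.enorm v ^ 2 + nx ^ 2 := by
      rw [hS_def, hz_def, sumElim_dotProduct_sumElim, smul_dotProduct,
        dotProduct_smul, dot_self_eq, dot_self_eq, hnx_def]
      simp [smul_eq_mul]; ring
    -- the key strict inequality
    have hfin : 2 * |t| * (nx * na) < c * S := by
      rcases eq_or_lt_of_le (show (0:ℝ) ≤ |t| * nx by positivity) with h0 | h0
      · have : 2 * |t| * (nx * na) = 2 * (|t| * nx) * na := by ring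
        rw [this, ← h0]
        simpa using mul_pos hc hS
      · have h1 : 2 * |t| * (nx * na) < 2 * (|t| * nx) * (c * _root_.enorm v) := by
          have := mul_lt_mul_of_pos_left hnalt (by linarith : (0:ℝ) < 2 * (|t| * nx))
          calc 2 * |t| * (nx * na) = 2 * (|t| * nx) * na := by ring
            _ < 2 * (|t| * nx) * (c * _root_.enorm v) := this
        have h2 : 2 * (|t| * nx) * (c * _root_.enorm v) ≤ c * S := by
          rw [hzz, ← sq_abs t]
          nlinarith [mul_nonneg hc.le (sq_nonneg (|t| * _root_.enorm v - nx))]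
        linarith
    -- assemble
    have hquad : ε * ⟪ψ p, toEuclideanCLM (𝕜 := ℝ) D (ψ p)⟫ =
        2 * ε * t * d + |θ| * S - ε * (z ⬝ᵥ (E *ᵥ z)) := by
      rw [hq, hLDL, Matrix.sub_mulVec, Matrix.add_mulVec, dotProduct_sub,
        dotProduct_add, hAz, hIz]
      rw [← hεθ]; ring
    rw [hquad]
    have hθS : |θ| * S = c * S + ρ * S := by rw [hc_def]; ring
    linarith
  -- dimension contradiction
  have hdim := dim_bound hD ε W hpos
  rw [hWrank] at hdim
  have hcard : Fintype.card {i // 0 < ε * hD.eigenvalues i} ≤ n := by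
    rcases hεabs with h | h
    · have : Fintype.card {i // 0 < ε * hD.eigenvalues i}
          = Fintype.card {i // 0 < hD.eigenvalues i} := by
        apply Fintype.card_congr
        apply Equiv.subtypeEquivRight
        intro i; rw [h, one_mul]
      rw [this, hcount]
    · have h1 : Fintype.card {i // 0 < ε * hD.eigenvalues i}
          ≤ Fintype.card {i // ¬ (0 < hD.eigenvalues i)} := by
        apply Fintype.card_subtype_mono
        intro i hi
        rw [h] at hi
        intro hpos'
        nlinarith
      have h2 : Fintype.card {i // ¬ (0 < hD.eigenvalues i)}
          = Fintype.card (Fin n ⊕ Fin n) - Fintype.card {i // 0 < hD.eigenvalues i} :=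
        Fintype.card_subtype_compl _
      rw [h2, hcount] at h1
      simpa using h1
  omega

end Main

theorem stmt1 {n : ℕ} (hn : 0 < n) (A : Matrix (Fin n) (Fin n) ℝ)
    (θ ρ : ℝ) (hρ : 0 ≤ ρ) (hθρ : ρ < |θ|)
    (L D : Matrix (Fin n ⊕ Fin n) (Fin n ⊕ Fin n) ℝ)
    (hL : IsUnit L) (hD : D.IsHermitian)
    (hcount : Fintype.card {i // 0 < hD.eigenvalues i} = n)
    (hres : specNorm (abar A + θ • (1 : Matrix (Fin n ⊕ Fin n) (Fin n ⊕ Fin n) ℝ)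
        - L * D * Lᵀ) ≤ ρ) :
    IsUnit A ∧ specNorm A⁻¹ ≤ 1 / (|θ| - ρ) := by
  have hKey := key hn A θ ρ hρ hθρ L D hL hD hcount hres
  have hc : 0 < |θ| - ρ := by linarith
  have hinj : Function.Injective A.mulVec := by
    intro a b hab
    have h1 := hKey (a - b)
    rw [Matrix.mulVec_sub, hab, sub_self] at h1
    have h0 : _root_.enorm (0 : Fin n → ℝ) = 0 := by simp [_root_.enorm]
    rw [h0] at h1
    have h2 : _root_.enorm (a - b) = 0 :=
      le_antisymm (by nlinarith [norm_nonneg ((WithLp.equiv 2 (Fin n → ℝ)).symm (a - b))])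
        (norm_nonneg _)
    have h3 : (WithLp.equiv 2 (Fin n → ℝ)).symm (a - b) = 0 := norm_eq_zero.1 h2
    have h4 : a - b = 0 := (WithLp.equiv 2 (Fin n → ℝ)).symm.injective (by simpa using h3)
    exact sub_eq_zero.1 h4
  have hA : IsUnit A := Matrix.mulVec_injective_iff_isUnit.mp hinj
  refine ⟨hA, ?_⟩
  have hAdet : IsUnit A.det := (Matrix.isUnit_iff_isUnit_det A).mp hA
  rw [specNorm]
  apply ContinuousLinearMap.opNorm_le_bound _ (by positivity)
  intro y
  set u := WithLp.equiv 2 (Fin n → ℝ) y with hu_def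
  have h1 : toEuclideanCLM (𝕜 := ℝ) A⁻¹ y = (WithLp.equiv 2 (Fin n → ℝ)).symm (A⁻¹ *ᵥ u) := by
    apply (WithLp.equiv 2 (Fin n → ℝ)).injective
    rw [clm_apply]
    simp [hu_def]
  have h2 := hKey (A⁻¹ *ᵥ u)
  rw [Matrix.mulVec_mulVec, Matrix.mul_nonsing_inv A hAdet, Matrix.one_mulVec] at h2
  have h3 : _root_.enorm u = ‖y‖ := by rw [_root_.enorm, hu_def, Equiv.symm_apply_apply]
  rw [h1]
  show _root_.enorm (A⁻¹ *ᵥ u) ≤ _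
  rw [div_mul_eq_mul_div, le_div_iff₀ hc, one_mul]
  rw [← h3]
  nlinarith [h2]
end

section
/- Let n be a positive integer, p ∈ [1, ∞], let A, Y be real n×n matrices with ‖Y·A − I‖_p = α < 1, and let b, x̂ be real n-vectors. Then A is nonsingular and ‖A⁻¹·b − x̂‖_p ≤ ‖Y‖_p·‖b − A·x̂‖_p/(1 − α). -/
open Matrix

/-- `ℓ^p` norm of a real vector. -/
noncomputable def lpNorm (p : ENNReal) [Fact (1 ≤ p)] {n : ℕ} (v : Fin n → ℝ) : ℝ :=
  ‖(WithLp.equiv p (Fin n → ℝ)).symm v‖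

/-- Operator norm on real square matrices induced by the `ℓ^p` vector norm. -/
noncomputable def lpOpNorm (p : ENNReal) [Fact (1 ≤ p)] {n : ℕ}
    (M : Matrix (Fin n) (Fin n) ℝ) : ℝ :=
  ‖LinearMap.toContinuousLinearMap
    ((WithLp.linearEquiv p ℝ (Fin n → ℝ)).symm.toLinearMap ∘ₗ M.mulVecLin ∘ₗ
      (WithLp.linearEquiv p ℝ (Fin n → ℝ)).toLinearMap)‖

noncomputable def phiCLM (p : ENNReal) [Fact (1 ≤ p)] {n : ℕ}
    (M : Matrix (Fin n) (Fin n) ℝ) : WithLp p (Fin n → ℝ) →L[ℝ] WithLp p (Fin n → ℝ) :=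
  LinearMap.toContinuousLinearMap
    ((WithLp.linearEquiv p ℝ (Fin n → ℝ)).symm.toLinearMap ∘ₗ M.mulVecLin ∘ₗ
      (WithLp.linearEquiv p ℝ (Fin n → ℝ)).toLinearMap)

lemma lpOpNorm_eq (p : ENNReal) [Fact (1 ≤ p)] {n : ℕ} (M : Matrix (Fin n) (Fin n) ℝ) :
    lpOpNorm p M = ‖phiCLM p M‖ := rfl

lemma phiCLM_apply (p : ENNReal) [Fact (1 ≤ p)] {n : ℕ} (M : Matrix (Fin n) (Fin n) ℝ)
    (x : WithLp p (Fin n → ℝ)) :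
    phiCLM p M x = (WithLp.equiv p (Fin n → ℝ)).symm (M.mulVec (WithLp.equiv p (Fin n → ℝ) x)) :=
  rfl

lemma lpNorm_mulVec_le (p : ENNReal) [Fact (1 ≤ p)] {n : ℕ} (M : Matrix (Fin n) (Fin n) ℝ)
    (v : Fin n → ℝ) : lpNorm p (M.mulVec v) ≤ lpOpNorm p M * lpNorm p v := by
  have h := (phiCLM p M).le_opNorm ((WithLp.equiv p (Fin n → ℝ)).symm v)
  simpa [phiCLM_apply, lpNorm, lpOpNorm_eq] using h

theorem stmt6 {n : ℕ} (hn : 0 < n) (p : ENNReal) [Fact (1 ≤ p)]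
    (A Y : Matrix (Fin n) (Fin n) ℝ) (α : ℝ)
    (hα : lpOpNorm p (Y * A - 1) = α) (hα1 : α < 1)
    (b xhat : Fin n → ℝ) :
    IsUnit A ∧
      lpNorm p (A⁻¹.mulVec b - xhat) ≤
        lpOpNorm p Y * lpNorm p (b - A.mulVec xhat) / (1 - α) := by
  have hα0 : 0 ≤ α := hα ▸ norm_nonneg _
  -- phi of (Y*A) is close to 1
  have hsub : phiCLM p (Y * A - 1) = phiCLM p (Y * A) - 1 := by
    ext x
    simp [phiCLM_apply, Matrix.sub_mulVec, Matrix.one_mulVec, ContinuousLinearMap.sub_apply]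
  have hnorm : ‖(1 : WithLp p (Fin n → ℝ) →L[ℝ] WithLp p (Fin n → ℝ)) - phiCLM p (Y * A)‖ < 1 := by
    rw [← norm_neg, neg_sub, ← hsub, ← lpOpNorm_eq, hα]; exact hα1
  -- unit
  have hu : IsUnit (phiCLM p (Y * A)) := by
    have := (Units.oneSub _ hnorm).isUnit
    simpa using this
  obtain ⟨u, hu'⟩ := hu
  have hbij : Function.Injective ((Y * A).mulVec) := by
    intro x y hxy
    have : phiCLM p (Y * A) ((WithLp.equiv p (Fin n → ℝ)).symm x)
        = phiCLM p (Y * A) ((WithLp.equiv p (Fin n → ℝ)).symm y) := by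
      simp [phiCLM_apply, hxy]
    have hinj : Function.Injective (phiCLM p (Y * A)) := by
      have hli : Function.LeftInverse (↑u⁻¹ : WithLp p (Fin n → ℝ) →L[ℝ] WithLp p (Fin n → ℝ))
          (phiCLM p (Y * A)) := by
        intro x
        rw [← hu']
        exact DFunLike.congr_fun u.inv_mul x
      exact hli.injective
    exact (WithLp.equiv p (Fin n → ℝ)).symm.injective.eq_iff.mp (hinj this)
  have hYA : IsUnit (Y * A) := Matrix.mulVec_injective_iff_isUnit.mp hbij
  have hA : IsUnit A := by
    rw [Matrix.isUnit_iff_isUnit_det] at hYA ⊢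
    rw [Matrix.det_mul] at hYA
    exact isUnit_of_mul_isUnit_right hYA
  refine ⟨hA, ?_⟩
  set r : Fin n → ℝ := A⁻¹.mulVec b - xhat with hr
  set s : Fin n → ℝ := b - A.mulVec xhat with hs
  have hAr : A.mulVec r = s := by
    rw [hr, hs, Matrix.mulVec_sub, Matrix.mulVec_mulVec,
      Matrix.mul_nonsing_inv A ((Matrix.isUnit_iff_isUnit_det A).mp hA), Matrix.one_mulVec]
  have hrid : r = Y.mulVec s - (Y * A - 1).mulVec r := by
    rw [Matrix.sub_mulVec, Matrix.one_mulVec, ← Matrix.mulVec_mulVec, hAr]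
    abel
  have hle : lpNorm p r ≤ lpOpNorm p Y * lpNorm p s + α * lpNorm p r := by
    calc lpNorm p r = lpNorm p (Y.mulVec s - (Y * A - 1).mulVec r) := by rw [← hrid]
      _ ≤ lpNorm p (Y.mulVec s) + lpNorm p ((Y * A - 1).mulVec r) := by
          simpa [lpNorm] using norm_sub_le
            ((WithLp.equiv p (Fin n → ℝ)).symm (Y.mulVec s))
            ((WithLp.equiv p (Fin n → ℝ)).symm ((Y * A - 1).mulVec r))
      _ ≤ lpOpNorm p Y * lpNorm p s + α * lpNorm p r := by
          gcongr
          · exact lpNorm_mulVec_le p Y s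
          · calc lpNorm p ((Y * A - 1).mulVec r) ≤ lpOpNorm p (Y * A - 1) * lpNorm p r :=
                lpNorm_mulVec_le p _ r
              _ = α * lpNorm p r := by rw [hα]
  have h1α : 0 < 1 - α := by linarith
  rw [le_div_iff₀ h1α]
  nlinarith [hle]
end

section
/- Let m be a positive integer, B a real symmetric nonsingular m×m matrix, θ a real number, and set α = |θ|·‖B⁻¹‖. Assume α < 1. Then B + θ·I is nonsingular, ‖I − (B + θ·I)⁻¹·B‖ ≤ α/(1 − α), and for any real m-vector b, the sequence defined by x⁽⁰⁾ = (B + θ·I)⁻¹·b and x⁽ᵏ⁺¹⁾ = x⁽ᵏ⁾ + (B + θ·I)⁻¹·(b − B·x⁽ᵏ⁾) satisfies ‖x⁽ᵏ⁺¹⁾ − B⁻¹·b‖ ≤ (α/(1 − α))^{k+1}·‖x⁽⁰⁾ − B⁻¹·b‖ for every k ≥ 0. -/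
set_option synthInstance.maxHeartbeats 1000000
set_option maxHeartbeats 1000000


open Matrix

/-- Euclidean norm of a real vector. -/
noncomputable def eNorm {m : Type*} [Fintype m] (v : m → ℝ) : ℝ :=
  Real.sqrt (∑ i, (v i) ^ 2)

lemma eNorm_eq {m : ℕ} (v : Fin m → ℝ) :
    eNorm v = ‖(WithLp.equiv 2 (Fin m → ℝ)).symm v‖ := by
  rw [EuclideanSpace.norm_eq]
  simp [eNorm, Real.norm_eq_abs, sq_abs]

lemma eNorm_nonneg {m : ℕ} (v : Fin m → ℝ) : 0 ≤ eNorm v := by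
  rw [eNorm_eq]; exact norm_nonneg _

lemma eNorm_mulVec_le {m : ℕ} (M : Matrix (Fin m) (Fin m) ℝ) (v : Fin m → ℝ) :
    eNorm (M.mulVec v) ≤ specNorm M * eNorm v := by
  rw [eNorm_eq, eNorm_eq]
  unfold specNorm
  have h := (Matrix.toEuclideanCLM (𝕜 := ℝ) M).le_opNorm
    ((WithLp.equiv 2 (Fin m → ℝ)).symm v)
  have h2 : Matrix.toEuclideanCLM (𝕜 := ℝ) M ((WithLp.equiv 2 (Fin m → ℝ)).symm v) =
      (WithLp.equiv 2 (Fin m → ℝ)).symm (M.mulVec v) := by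
    exact Matrix.toEuclideanCLM_toLp M v
  rwa [h2] at h

lemma specNorm_mul_le {m : ℕ} (A C : Matrix (Fin m) (Fin m) ℝ) :
    specNorm (A * C) ≤ specNorm A * specNorm C := by
  unfold specNorm; rw [_root_.map_mul]; exact norm_mul_le _ _

lemma specNorm_sub_le {m : ℕ} (A C : Matrix (Fin m) (Fin m) ℝ) :
    specNorm (A - C) ≤ specNorm A + specNorm C := by
  unfold specNorm; rw [_root_.map_sub]; exact norm_sub_le _ _

lemma specNorm_one_le {m : ℕ} :
    specNorm (1 : Matrix (Fin m) (Fin m) ℝ) ≤ 1 := by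
  unfold specNorm
  rw [_root_.map_one, ContinuousLinearMap.one_def]
  exact ContinuousLinearMap.norm_id_le

lemma specNorm_nonneg {m : ℕ} (A : Matrix (Fin m) (Fin m) ℝ) : 0 ≤ specNorm A :=
  norm_nonneg _

theorem stmt13 {m : ℕ} (hm : 0 < m) (B : Matrix (Fin m) (Fin m) ℝ)
    (hBsymm : Bᵀ = B) (hB : IsUnit B) (θ : ℝ) (α : ℝ)
    (hα : α = |θ| * specNorm B⁻¹) (hα1 : α < 1)
    (b : Fin m → ℝ) (x : ℕ → (Fin m → ℝ))
    (hx0 : x 0 = (B + θ • (1 : Matrix (Fin m) (Fin m) ℝ))⁻¹.mulVec b)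
    (hxk : ∀ k : ℕ, x (k + 1) =
      x k + (B + θ • (1 : Matrix (Fin m) (Fin m) ℝ))⁻¹.mulVec (b - B.mulVec (x k))) :
    IsUnit (B + θ • (1 : Matrix (Fin m) (Fin m) ℝ)) ∧
      specNorm (1 - (B + θ • (1 : Matrix (Fin m) (Fin m) ℝ))⁻¹ * B) ≤ α / (1 - α) ∧
      ∀ k : ℕ, eNorm (x (k + 1) - B⁻¹.mulVec b) ≤
        (α / (1 - α)) ^ (k + 1) * eNorm (x 0 - B⁻¹.mulVec b) := by
  have hBdet : IsUnit B.det := B.isUnit_iff_isUnit_det.mp hB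
  set N : Matrix (Fin m) (Fin m) ℝ := θ • B⁻¹ with hN
  have hα0 : 0 ≤ α := by
    rw [hα]; exact mul_nonneg (abs_nonneg _) (specNorm_nonneg _)
  have h1α : 0 < 1 - α := by linarith
  -- the norm of N
  have hNnorm : specNorm N = α := by
    rw [hα, hN]
    unfold specNorm
    rw [_root_.map_smul]
    exact (norm_smul θ (Matrix.toEuclideanCLM (𝕜 := ℝ) B⁻¹)).trans
      (by rw [Real.norm_eq_abs])
  -- 1 + N is a unit
  have h1N : IsUnit (1 + N) := by
    have hlt : ‖-(Matrix.toEuclideanCLM (𝕜 := ℝ) N)‖ < 1 := by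
      rw [norm_neg]
      exact lt_of_le_of_lt (le_of_eq hNnorm) hα1
    have hu : IsUnit (1 - -(Matrix.toEuclideanCLM (𝕜 := ℝ) N)) := by
      have := (Units.oneSub _ hlt).isUnit
      simpa [Units.val_oneSub] using this
    rw [sub_neg_eq_add] at hu
    have hu2 : IsUnit (Matrix.toEuclideanCLM (𝕜 := ℝ) (1 + N)) := by
      rwa [_root_.map_add, _root_.map_one]
    have := hu2.map (Matrix.toEuclideanCLM (𝕜 := ℝ)).symm
    simpa using this
  have h1Ndet : IsUnit (1 + N).det := (1 + N).isUnit_iff_isUnit_det.mp h1N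
  -- factorization
  have hCN : B + θ • (1 : Matrix (Fin m) (Fin m) ℝ) = B * (1 + N) := by
    rw [mul_add, mul_one, hN, Matrix.mul_smul, Matrix.mul_nonsing_inv _ hBdet]
  have hC : IsUnit (B + θ • (1 : Matrix (Fin m) (Fin m) ℝ)) := by
    rw [hCN]; exact hB.mul h1N
  -- inverse identities
  have hinv : (B + θ • (1 : Matrix (Fin m) (Fin m) ℝ))⁻¹ * B = (1 + N)⁻¹ := by
    rw [hCN, Matrix.mul_inv_rev, mul_assoc, Matrix.nonsing_inv_mul _ hBdet, mul_one]
  have hid : (1 + N)⁻¹ = 1 - (1 + N)⁻¹ * N := by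
    have h1 : (1 + N)⁻¹ * (1 + N) = 1 := Matrix.nonsing_inv_mul _ h1Ndet
    rw [mul_add, mul_one] at h1
    linear_combination (norm := module) h1
  have hE : 1 - (B + θ • (1 : Matrix (Fin m) (Fin m) ℝ))⁻¹ * B = (1 + N)⁻¹ * N := by
    rw [hinv]
    nth_rewrite 1 [hid]
    module
  -- norm bound on (1+N)⁻¹
  have hu : specNorm ((1 + N)⁻¹) ≤ 1 / (1 - α) := by
    have h1 : specNorm ((1 + N)⁻¹) ≤ 1 + specNorm ((1 + N)⁻¹) * α := by
      calc specNorm ((1 + N)⁻¹) = specNorm (1 - (1 + N)⁻¹ * N) := by rw [← hid]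
        _ ≤ specNorm (1 : Matrix (Fin m) (Fin m) ℝ) + specNorm ((1 + N)⁻¹ * N) :=
            specNorm_sub_le _ _
        _ ≤ 1 + specNorm ((1 + N)⁻¹) * specNorm N :=
            add_le_add specNorm_one_le (specNorm_mul_le _ _)
        _ = 1 + specNorm ((1 + N)⁻¹) * α := by rw [hNnorm]
    rw [le_div_iff₀ h1α]
    nlinarith
  have hEbound : specNorm (1 - (B + θ • (1 : Matrix (Fin m) (Fin m) ℝ))⁻¹ * B)
      ≤ α / (1 - α) := by
    rw [hE]
    calc specNorm ((1 + N)⁻¹ * N) ≤ specNorm ((1 + N)⁻¹) * specNorm N :=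
          specNorm_mul_le _ _
      _ = specNorm ((1 + N)⁻¹) * α := by rw [hNnorm]
      _ ≤ (1 / (1 - α)) * α := mul_le_mul_of_nonneg_right hu hα0
      _ = α / (1 - α) := by ring
  refine ⟨hC, hEbound, ?_⟩
  -- the iteration
  set y : Fin m → ℝ := B⁻¹.mulVec b with hy
  set E : Matrix (Fin m) (Fin m) ℝ :=
    1 - (B + θ • (1 : Matrix (Fin m) (Fin m) ℝ))⁻¹ * B with hEdef
  have hBy : B.mulVec y = b := by
    rw [hy, Matrix.mulVec_mulVec, Matrix.mul_nonsing_inv _ hBdet, Matrix.one_mulVec]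
  have key : ∀ k, x (k + 1) - y = E.mulVec (x k - y) := by
    intro k
    rw [hxk k, hEdef, Matrix.sub_mulVec, Matrix.one_mulVec, ← Matrix.mulVec_mulVec,
      Matrix.mulVec_sub, Matrix.mulVec_sub, hBy, Matrix.mulVec_sub]
    abel
  set β : ℝ := α / (1 - α) with hβ
  have hβ0 : 0 ≤ β := div_nonneg hα0 (le_of_lt h1α)
  have main : ∀ k, eNorm (x k - y) ≤ β ^ k * eNorm (x 0 - y) := by
    intro k
    induction k with
    | zero => simp
    | succ k ih =>
        calc eNorm (x (k + 1) - y) = eNorm (E.mulVec (x k - y)) := by rw [key k]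
          _ ≤ specNorm E * eNorm (x k - y) := eNorm_mulVec_le _ _
          _ ≤ β * eNorm (x k - y) :=
              mul_le_mul_of_nonneg_right hEbound (eNorm_nonneg _)
          _ ≤ β * (β ^ k * eNorm (x 0 - y)) := mul_le_mul_of_nonneg_left ih hβ0
          _ = β ^ (k + 1) * eNorm (x 0 - y) := by ring
  intro k
  exact main (k + 1)
end
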